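/- arXiv:1801.02373 — 4 statements merged into one kernel-verified Lean document; each statement's English description precedes it below -/
import Mathlib

section
/- Let (u,B), (u',B') ∈ ℂ^g × ℍ_g with θ(u,B) ≠ 0 and θ(u',B') ≠ 0. The discrete Gaussian distributions with parameters (u,B) and (u',B') are equal (i.e., p(k;u,B) = p(k;u',B') for all k ∈ ℤ^g) if and only if there exist a symmetric integer matrix β ∈ Sym²(ℤ^g) and a ∈ ℤ^g such that u = u' + i((1/2)diag(β) + a) and B = B' − iβ, where diag(β) is the vector of diagonal entries of β. -/
open scoped BigOperators
open Matrix

noncomputable section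

variable {ι : Type*} [Fintype ι] [DecidableEq ι]

/-- Cast an integer vector to a complex vector. -/
def zc (n : ι → ℤ) : ι → ℂ := fun i => (n i : ℂ)

/-- A single term of the Riemann theta series, `e(-(1/2) nᵗBn + nᵗu)` with `e(x) = exp(2πx)`. -/
def thetaTerm (u : ι → ℂ) (B : Matrix ι ι ℂ) (n : ι → ℤ) : ℂ :=
  Complex.exp ((2 * (Real.pi : ℂ)) *
    (-(1/2) * dotProduct (zc n) (B.mulVec (zc n)) + dotProduct (zc n) u))

/-- The Riemann theta function `θ(u,B) = Σ_{n∈ℤ^g} e(-(1/2) nᵗBn + nᵗu)`. -/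
def theta (u : ι → ℂ) (B : Matrix ι ι ℂ) : ℂ := ∑' n : ι → ℤ, thetaTerm u B n

/-- Membership in the Siegel right half-space: symmetric with positive definite real part. -/
def SiegelH (B : Matrix ι ι ℂ) : Prop := B.IsSymm ∧ (B.map Complex.re).PosDef

/-- The (complex) discrete Gaussian mass function. -/
def dg (u : ι → ℂ) (B : Matrix ι ι ℂ) (n : ι → ℤ) : ℂ := thetaTerm u B n / theta u B

/-!
At `k = 0` the masses are `θ(u,B)⁻¹` and `θ(u',B')⁻¹`, so equal distributions have equal
normalisations and hence equal theta terms; that is, the exponent difference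
`q(k) = -(1/2) kᵗ(B - B')k + kᵗ(u - u')` lies in `iℤ` for every `k ∈ ℤ^g`.
Polarising `q` at unit vectors, `q(e_j + e_l) - q(e_j) - q(e_l) = -(B - B')_{jl}`, shows
`B - B' = -iβ` with `β` integral and symmetric, and `q(e_j)` then determines `u - u'`.
Conversely, for such shifts `q(k) = i((kᵗβk + Σ_j β_jj k_j)/2 + kᵗa)`, which lies in `iℤ`
because modulo `2` a symmetric form is diagonal: `kᵗβk ≡ Σ_j β_jj k_j² ≡ Σ_j β_jj k_j`.
-/

set_option linter.unusedSectionVars false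

open Complex

theorem CharTwo.sum_sum_eq_sum_diag {α R : Type*} [Ring R] [CharP R 2] (s : Finset α)
    (f : α → α → R) (hf : ∀ i j, f i j = f j i) :
    ∑ i ∈ s, ∑ j ∈ s, f i j = ∑ i ∈ s, f i i := by
  classical
  induction s using Finset.induction_on with
  | empty => simp
  | insert a s ha ih =>
    simp only [Finset.sum_insert ha, Finset.sum_add_distrib, ih]
    rw [Finset.sum_congr rfl fun i _ => hf i a, ← add_assoc, add_assoc (f a a),
      CharTwo.add_self_eq_zero, add_zero]

theorem Matrix.IsSymm.dotProduct_mulVec_self_charTwo {α R : Type*} [Fintype α] [CommRing R]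
    [CharP R 2] {M : Matrix α α R} (hM : M.IsSymm) (v : α → R) :
    v ⬝ᵥ M *ᵥ v = ∑ i, M i i * v i ^ 2 := by
  simp only [dotProduct, mulVec, Finset.mul_sum]
  rw [CharTwo.sum_sum_eq_sum_diag _ _ fun i j => by rw [hM.apply i j]; ring]
  exact Finset.sum_congr rfl fun i _ => by ring

theorem Matrix.IsSymm.even_dotProduct_mulVec_self_add {α : Type*} [Fintype α]
    {β : Matrix α α ℤ} (hβ : β.IsSymm) (k : α → ℤ) :
    Even (k ⬝ᵥ β *ᵥ k + ∑ i, β i i * k i) := by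
  have hcast : ((k ⬝ᵥ β *ᵥ k : ℤ) : ZMod 2) =
      (Int.cast ∘ k) ⬝ᵥ β.map Int.cast *ᵥ (Int.cast ∘ k) := by
    simp [dotProduct, mulVec]
  rw [← ZMod.intCast_eq_zero_iff_even, Int.cast_add, hcast,
    (hβ.map _).dotProduct_mulVec_self_charTwo, Int.cast_sum, ← Finset.sum_add_distrib]
  refine Finset.sum_eq_zero fun i _ => ?_
  simp only [Function.comp_apply, map_apply, ZMod.pow_card, Int.cast_mul]
  exact CharTwo.add_self_eq_zero _

theorem zc_zero : zc (0 : ι → ℤ) = 0 := by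
  ext i; simp [zc]

theorem zc_add (k l : ι → ℤ) : zc (k + l) = zc k + zc l := by
  ext i; simp [zc]

theorem zc_single (j : ι) (m : ℤ) : zc (Pi.single j m) = Pi.single j (m : ℂ) := by
  ext i; by_cases h : i = j <;> simp [zc, h]

def thetaExponent (u : ι → ℂ) (B : Matrix ι ι ℂ) (k : ι → ℤ) : ℂ :=
  -(1/2) * (zc k ⬝ᵥ B *ᵥ zc k) + zc k ⬝ᵥ u

theorem thetaTerm_eq_exp (u : ι → ℂ) (B : Matrix ι ι ℂ) (k : ι → ℤ) :
    thetaTerm u B k = exp (2 * Real.pi * thetaExponent u B k) := by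
  rw [thetaTerm, thetaExponent]

theorem thetaTerm_zero (u : ι → ℂ) (B : Matrix ι ι ℂ) : thetaTerm u B 0 = 1 := by
  simp [thetaTerm, zc_zero]

theorem thetaExponent_sub (u u' : ι → ℂ) (B B' : Matrix ι ι ℂ) (k : ι → ℤ) :
    thetaExponent (u - u') (B - B') k = thetaExponent u B k - thetaExponent u' B' k := by
  simp only [thetaExponent, sub_mulVec, dotProduct_sub]
  ring

theorem thetaTerm_eq_thetaTerm_iff (u u' : ι → ℂ) (B B' : Matrix ι ι ℂ) (k : ι → ℤ) :
    thetaTerm u B k = thetaTerm u' B' k ↔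
      ∃ n : ℤ, thetaExponent (u - u') (B - B') k = n * I := by
  have h2π : (2 * Real.pi : ℂ) ≠ 0 := by simp [Real.pi_ne_zero]
  simp only [thetaTerm_eq_exp, exp_eq_exp_iff_exists_int, thetaExponent_sub]
  exact exists_congr fun n => ⟨fun h => mul_left_cancel₀ h2π (by linear_combination h),
    fun h => by linear_combination 2 * (Real.pi : ℂ) * h⟩

theorem forall_dg_eq_iff (u u' : ι → ℂ) (B B' : Matrix ι ι ℂ) (hθ' : theta u' B' ≠ 0) :
    (∀ k, dg u B k = dg u' B' k) ↔ ∀ k, thetaTerm u B k = thetaTerm u' B' k := by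
  constructor
  · intro h k
    have hθ : theta u B = theta u' B' := by
      simpa [dg, thetaTerm_zero] using h 0
    simpa [dg, hθ, div_left_inj' hθ'] using h k
  · intro h k
    rw [dg, dg, h k, theta, theta, tsum_congr h]

section
variable (v : ι → ℂ) {C : Matrix ι ι ℂ}

theorem thetaExponent_add (hC : C.IsSymm) (k l : ι → ℤ) :
    thetaExponent v C (k + l) =
      thetaExponent v C k + thetaExponent v C l - zc k ⬝ᵥ C *ᵥ zc l := by
  have hlk : zc l ⬝ᵥ C *ᵥ zc k = zc k ⬝ᵥ C *ᵥ zc l := by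
    rw [dotProduct_mulVec, ← mulVec_transpose, hC.eq, dotProduct_comm]
  simp only [thetaExponent, zc_add, mulVec_add, dotProduct_add, add_dotProduct, hlk]
  ring

theorem thetaExponent_single_one (j : ι) :
    thetaExponent v C (Pi.single j 1) = -(1/2) * C j j + v j := by
  simp [thetaExponent, zc_single]

theorem zc_single_dotProduct_mulVec (j l : ι) :
    zc (Pi.single j 1) ⬝ᵥ C *ᵥ zc (Pi.single l 1) = C j l := by
  simp [zc_single]

end

theorem exists_int_of_thetaExponent_eq_int_mul_I (v : ι → ℂ) {C : Matrix ι ι ℂ}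
    (hC : C.IsSymm) (h : ∀ k, ∃ n : ℤ, thetaExponent v C k = n * I) :
    ∃ (β : Matrix ι ι ℤ) (a : ι → ℤ), β.IsSymm ∧
      v = (fun j => I * ((1/2) * (β j j : ℂ) + (a j : ℂ))) ∧
      C = -(I • β.map (Int.cast : ℤ → ℂ)) := by
  choose N hN using h
  let e (j : ι) : ι → ℤ := Pi.single j 1
  let β : Matrix ι ι ℤ := Matrix.of fun j l => N (e j + e l) - N (e j) - N (e l)
  have hCβ : ∀ j l, C j l = -(I * β j l) := by
    intro j l
    have h := thetaExponent_add v hC (e j) (e l)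
    rw [hN, hN, hN, zc_single_dotProduct_mulVec] at h
    simp only [β, of_apply]
    push_cast
    linear_combination h
  refine ⟨β, fun j => N (e j) - β j j, ?_, ?_, ?_⟩
  · refine IsSymm.ext fun j l => ?_
    simp only [β, of_apply, add_comm (e l)]
    ring
  · ext j
    have hj := thetaExponent_single_one v (C := C) j
    rw [hN, hCβ] at hj
    push_cast
    linear_combination -hj
  · ext j l
    simp [hCβ]

theorem exists_thetaExponent_shift_eq_int_mul_I {β : Matrix ι ι ℤ} (hβ : β.IsSymm)
    (a k : ι → ℤ) :
    ∃ n : ℤ, thetaExponent (fun j => I * ((1/2) * (β j j : ℂ) + (a j : ℂ)))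
      (-(I • β.map (Int.cast : ℤ → ℂ))) k = n * I := by
  obtain ⟨m, hm⟩ := hβ.even_dotProduct_mulVec_self_add k
  refine ⟨m + k ⬝ᵥ a, ?_⟩
  have hquad :
      zc k ⬝ᵥ β.map (Int.cast : ℤ → ℂ) *ᵥ zc k = ((k ⬝ᵥ β *ᵥ k : ℤ) : ℂ) := by
    simp [dotProduct, mulVec, zc]
  have hlin : zc k ⬝ᵥ (fun j => I * ((1/2) * (β j j : ℂ) + (a j : ℂ))) =
      I * ((1/2) * ((∑ j, β j j * k j : ℤ) : ℂ) + ((k ⬝ᵥ a : ℤ) : ℂ)) := by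
    simp only [dotProduct, zc, Int.cast_sum, Int.cast_mul, Finset.mul_sum,
      ← Finset.sum_add_distrib]
    exact Finset.sum_congr rfl fun j _ => by ring
  have hm' := congrArg (Int.cast : ℤ → ℂ) hm
  simp only [thetaExponent, neg_mulVec, smul_mulVec, dotProduct_neg, dotProduct_smul, smul_eq_mul,
    hquad, hlin]
  push_cast at hm' ⊢
  linear_combination (I / 2) * hm'

theorem dg_equivalence_general (u u' : ι → ℂ) (B B' : Matrix ι ι ℂ)
    (hB : SiegelH B) (hB' : SiegelH B')
    (hθ' : theta u' B' ≠ 0) :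
    (∀ k : ι → ℤ, dg u B k = dg u' B' k) ↔
      ∃ (β : Matrix ι ι ℤ) (a : ι → ℤ), β.IsSymm ∧
        u = u' + (fun j => Complex.I * ((1/2) * (β j j : ℂ) + (a j : ℂ))) ∧
        B = B' - Complex.I • (β.map (Int.cast : ℤ → ℂ)) := by
  simp only [forall_dg_eq_iff u u' B B' hθ', thetaTerm_eq_thetaTerm_iff]
  constructor
  · intro h
    obtain ⟨β, a, hβ, hu, hBB⟩ :=
      exists_int_of_thetaExponent_eq_int_mul_I _ (hB.1.sub hB'.1) h
    exact ⟨β, a, hβ, eq_add_of_sub_eq' hu, by rw [sub_eq_add_neg, ← hBB, add_sub_cancel]⟩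
  · rintro ⟨β, a, hβ, rfl, rfl⟩
    simpa using exists_thetaExponent_shift_eq_int_mul_I hβ a

/-- Equivalence of discrete Gaussians: two discrete Gaussians with parameters `(u,B)` and
`(u',B')` have the same distribution iff `u = u' + i((1/2)diag(β) + a)` and `B = B' - iβ`
for a symmetric integer matrix `β` and `a ∈ ℤ^g`. -/
theorem dg_equivalence (u u' : ι → ℂ) (B B' : Matrix ι ι ℂ)
    (hB : SiegelH B) (hB' : SiegelH B')
    (hθ : theta u B ≠ 0) (hθ' : theta u' B' ≠ 0) :
    (∀ k : ι → ℤ, dg u B k = dg u' B' k) ↔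
      ∃ (β : Matrix ι ι ℤ) (a : ι → ℤ), β.IsSymm ∧
        u = u' + (fun j => Complex.I * ((1/2) * (β j j : ℂ) + (a j : ℂ))) ∧
        B = B' - Complex.I • (β.map (Int.cast : ℤ → ℂ)) :=
  dg_equivalence_general u u' B B' hB hB' hθ'
end
end

section
/- For all (u,B) ∈ ℂ^g × ℍ_g and integers n ∈ ℤ^g, the condition exp(2π(-(1/2) nᵗ(B−B')n + nᵗ(u−u'))) = 1 for all n ∈ ℤ^g holds if and only if, writing B − B' = −iβ and u − u' = (1/2)i·diag(β) + i·a, one has (1/2)nᵗβn + (1/2)nᵗdiag(β) + nᵗa ∈ ℤ for all n ∈ ℤ^g, which in turn holds if and only if β is a symmetric matrix with integer entries and a ∈ ℤ^g. -/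
/-!
With `B - B' = -iβ` and `u - u' = i(½ diag β + a)` the exponent is `2πi Q(n)`, where
`Q(x) = ½ xᵗβx + ½ xᵗ diag β + xᵗa`, and `exp (2πi w) = 1` exactly when `w ∈ ℤ`.
For symmetric `β` one has `Q(x + y) = Q(x) + Q(y) + xᵗβy` and `Q(c eᵢ) = c(c+1)/2 βᵢᵢ + c aᵢ`.
If `Q` is integral on `ℤ^g`, then `βᵢⱼ = Q(eᵢ + eⱼ) - Q(eᵢ) - Q(eⱼ)` and `aᵢ = Q(eᵢ) - βᵢᵢ`
are integers. Conversely, for integral `β` and `a` the same two identities make `Q` integral on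
integer multiples of the `eᵢ` (as `c(c+1)/2 ∈ ℤ`) and on sums of points where it is integral.
-/

open scoped BigOperators
open Matrix

noncomputable section

variable {ι : Type*} [Fintype ι] [DecidableEq ι]

lemma intCast_comp_single {R κ : Type*} [AddGroupWithOne R] [DecidableEq κ] (i : κ) (k : ℤ) :
    (Int.cast ∘ Pi.single i k : κ → R) = Pi.single i (k : R) :=
  funext (Pi.apply_single (fun _ => Int.cast) (fun _ => Int.cast_zero) i k)

lemma intCast_comp_add {R κ : Type*} [AddGroupWithOne R] (m n : κ → ℤ) :
    (Int.cast ∘ (m + n) : κ → R) = Int.cast ∘ m + Int.cast ∘ n :=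
  funext fun i => Int.cast_add (m i) (n i)

lemma dotProduct_mulVec_mem {R κ : Type*} [Ring R] [Fintype κ] {S : Subring R}
    {β : Matrix κ κ R} (hβ : ∀ i j, β i j ∈ S) {x y : κ → R} (hx : ∀ i, x i ∈ S)
    (hy : ∀ i, y i ∈ S) : x ⬝ᵥ β *ᵥ y ∈ S :=
  S.sum_mem fun i _ => S.mul_mem (hx i) (S.sum_mem fun j _ => S.mul_mem (hβ i j) (hy j))

section QuadForm

variable {K κ : Type*} [Field K] [Fintype κ]

def quadForm (β : Matrix κ κ K) (a x : κ → K) : K :=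
  1 / 2 * (x ⬝ᵥ β *ᵥ x) + 1 / 2 * (x ⬝ᵥ β.diag) + x ⬝ᵥ a

lemma quadForm_add [CharZero K] {β : Matrix κ κ K} (hβ : β.IsSymm) (a x y : κ → K) :
    quadForm β a (x + y) = quadForm β a x + quadForm β a y + x ⬝ᵥ β *ᵥ y := by
  have hyx : y ⬝ᵥ β *ᵥ x = x ⬝ᵥ β *ᵥ y := by
    rw [dotProduct_mulVec, dotProduct_comm, ← mulVec_transpose, hβ.eq]
  simp only [quadForm, mulVec_add, dotProduct_add, add_dotProduct, hyx]
  ring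

lemma quadForm_single [DecidableEq κ] (β : Matrix κ κ K) (a : κ → K) (i : κ) (c : K) :
    quadForm β a (Pi.single i c) = c * (c + 1) / 2 * β i i + c * a i := by
  simp [quadForm]
  ring

lemma single_dotProduct_mulVec_single [DecidableEq κ] (β : Matrix κ κ K) (i j : κ) :
    Pi.single i 1 ⬝ᵥ β *ᵥ Pi.single j 1 = β i j := by
  simp

variable [CharZero K] [DecidableEq κ] {β : Matrix κ κ K}

lemma mem_bot_of_forall_quadForm_intCast_mem_bot (hβ : β.IsSymm) {a : κ → K}
    (h : ∀ n : κ → ℤ, quadForm β a (Int.cast ∘ n) ∈ (⊥ : Subring K)) :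
    (∀ i j, β i j ∈ (⊥ : Subring K)) ∧ ∀ i, a i ∈ (⊥ : Subring K) := by
  have he : ∀ i : κ, quadForm β a (Pi.single i 1) ∈ (⊥ : Subring K) := fun i => by
    have := h (Pi.single i 1)
    rwa [intCast_comp_single, Int.cast_one] at this
  have hee : ∀ i j : κ, quadForm β a (Pi.single i 1 + Pi.single j 1 : κ → K) ∈ (⊥ : Subring K) :=
    fun i j => by
      have := h (Pi.single i 1 + Pi.single j 1)
      rwa [intCast_comp_add, intCast_comp_single, intCast_comp_single, Int.cast_one] at this
  have hentry : ∀ i j : κ, β i j = quadForm β a (Pi.single i 1 + Pi.single j 1 : κ → K) -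
      quadForm β a (Pi.single i 1) - quadForm β a (Pi.single j 1) := fun i j => by
    rw [quadForm_add hβ, single_dotProduct_mulVec_single]; ring
  have hβint : ∀ i j : κ, β i j ∈ (⊥ : Subring K) := fun i j => by
    rw [hentry]; exact sub_mem (sub_mem (hee i j) (he i)) (he j)
  refine ⟨hβint, fun i => ?_⟩
  have hai : a i = quadForm β a (Pi.single i 1) - β i i := by rw [quadForm_single]; ring
  rw [hai]; exact sub_mem (he i) (hβint i i)

lemma quadForm_intCast_mem_bot (hβ : β.IsSymm) {a : κ → K}
    (hβint : ∀ i j, β i j ∈ (⊥ : Subring K)) (haint : ∀ i, a i ∈ (⊥ : Subring K))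
    (n : κ → ℤ) : quadForm β a (Int.cast ∘ n) ∈ (⊥ : Subring K) := by
  induction n using Pi.single_induction with
  | zero => simp [quadForm]
  | add m n hm hn =>
    rw [intCast_comp_add, quadForm_add hβ]
    exact add_mem (add_mem hm hn) (dotProduct_mulVec_mem hβint
      (fun i => intCast_mem _ (m i)) (fun i => intCast_mem _ (n i)))
  | single i k =>
    obtain ⟨t, ht⟩ := Int.even_mul_succ_self k
    have htri : (k : K) * (k + 1) / 2 = t := by
      have := congrArg (Int.cast : ℤ → K) ht
      push_cast at this
      rw [this]; ring
    rw [intCast_comp_single, quadForm_single, htri]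
    exact add_mem (mul_mem (intCast_mem _ t) (hβint i i)) (mul_mem (intCast_mem _ k) (haint i))

theorem forall_quadForm_intCast_mem_bot_iff (hβ : β.IsSymm) (a : κ → K) :
    (∀ n : κ → ℤ, quadForm β a (Int.cast ∘ n) ∈ (⊥ : Subring K)) ↔
      (∀ i j, β i j ∈ (⊥ : Subring K)) ∧ ∀ i, a i ∈ (⊥ : Subring K) :=
  ⟨mem_bot_of_forall_quadForm_intCast_mem_bot hβ, fun h => quadForm_intCast_mem_bot hβ h.1 h.2⟩

end QuadForm

theorem exp_two_pi_I_mul_eq_one_iff (w : ℂ) :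
    Complex.exp (2 * Real.pi * Complex.I * w) = 1 ↔ ∃ k : ℤ, w = k := by
  rw [Complex.exp_eq_one_iff]
  refine exists_congr fun k => ?_
  rw [mul_comm _ w]
  exact mul_left_inj' Complex.two_pi_I_ne_zero

lemma neg_half_quad_add_linear_eq_I_mul_quadForm {κ : Type*} [Fintype κ] (β : Matrix κ κ ℂ)
    (a x : κ → ℂ) :
    -(1 / 2) * (x ⬝ᵥ (-Complex.I • β) *ᵥ x) +
        x ⬝ᵥ (fun j => 1 / 2 * Complex.I * β j j + Complex.I * a j) =
      Complex.I * quadForm β a x := by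
  have hv : (fun j => 1 / 2 * Complex.I * β j j + Complex.I * a j) =
      (1 / 2 * Complex.I) • β.diag + Complex.I • a := rfl
  rw [hv, smul_mulVec, dotProduct_smul, dotProduct_add, dotProduct_smul, dotProduct_smul]
  simp only [quadForm, smul_eq_mul]
  ring

/-- The condition `e(-(1/2)nᵗ(B-B')n + nᵗ(u-u')) = 1` for all `n ∈ ℤ^g` holds iff, writing
`B - B' = -iβ` and `u - u' = (1/2)i·diag(β) + i·a`, one has
`(1/2)nᵗβn + (1/2)nᵗdiag(β) + nᵗa ∈ ℤ` for all `n`, which holds iff `β` has integer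
entries and `a ∈ ℤ^g`. -/
theorem dg_equivalence_conditions (u u' : ι → ℂ) (B B' : Matrix ι ι ℂ)
    (β : Matrix ι ι ℂ) (a : ι → ℂ) (hβsymm : β.IsSymm)
    (hβ : B - B' = -Complex.I • β)
    (ha : u - u' = fun j => (1/2) * Complex.I * β j j + Complex.I * a j) :
    ((∀ n : ι → ℤ, Complex.exp ((2 * (Real.pi : ℂ)) *
        (-(1/2) * dotProduct (zc n) ((B - B').mulVec (zc n)) + dotProduct (zc n) (u - u'))) = 1) ↔
      (∀ n : ι → ℤ, ∃ z : ℤ,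
        (1/2) * dotProduct (zc n) (β.mulVec (zc n)) + (1/2) * (∑ i, (n i : ℂ) * β i i) +
          dotProduct (zc n) a = (z : ℂ))) ∧
    ((∀ n : ι → ℤ, ∃ z : ℤ,
        (1/2) * dotProduct (zc n) (β.mulVec (zc n)) + (1/2) * (∑ i, (n i : ℂ) * β i i) +
          dotProduct (zc n) a = (z : ℂ)) ↔
      ((∀ i j, ∃ z : ℤ, β i j = (z : ℂ)) ∧ (∀ i, ∃ z : ℤ, a i = (z : ℂ)))) := by
  have mem_bot_iff : ∀ w : ℂ, w ∈ (⊥ : Subring ℂ) ↔ ∃ z : ℤ, w = z := fun w => by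
    simp only [Subring.mem_bot, eq_comm]
  refine ⟨forall_congr' fun n => ?_, ?_⟩
  · rw [hβ, ha, neg_half_quad_add_linear_eq_I_mul_quadForm, ← mul_assoc,
      exp_two_pi_I_mul_eq_one_iff]
    rfl
  · have h := forall_quadForm_intCast_mem_bot_iff hβsymm a
    simp only [mem_bot_iff] at h
    exact h
end
end

section
/- Let X = (X₁,X₂) be a discrete Gaussian on ℤ^{g₁} × ℤ^{g₂} with parameters u = (u₁,u₂) and block matrix B = [[B₁₁, B₁₂],[B₁₂ᵗ, B₂₂]]. Then the marginal distribution of X₁ satisfies ℙ(X₁ = n₁) = (θ(u₂ − B₁₂ᵗn₁, B₂₂)/θ(u,B)) · exp(2π(-(1/2)n₁ᵗB₁₁n₁ + n₁ᵗu₁)) for all n₁ ∈ ℤ^{g₁}. -/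
/-! The cross term `n₁ᵗB₁₂n₂` of the quadratic form is linear in `n₂`, so it can be absorbed
into the linear parameter of the `n₂`-variable: each term of the joint theta series factors as
the theta term of `n₂` at `(u₂ - B₁₂ᵗn₁, B₂₂)` times a factor depending on `n₁` only, which
then comes out of the sum over `n₂`. -/

open scoped BigOperators
open Matrix

noncomputable section

variable {ι : Type*} [Fintype ι] [DecidableEq ι]

lemma zc_sumElim {ι₁ ι₂ : Type*} (n₁ : ι₁ → ℤ) (n₂ : ι₂ → ℤ) :
    zc (Sum.elim n₁ n₂) = Sum.elim (zc n₁) (zc n₂) := by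
  funext i
  cases i <;> rfl

lemma thetaTerm_fromBlocks_sumElim {ι₁ ι₂ : Type*} [Fintype ι₁] [Fintype ι₂]
    (u₁ : ι₁ → ℂ) (u₂ : ι₂ → ℂ) (B₁₁ : Matrix ι₁ ι₁ ℂ) (B₁₂ : Matrix ι₁ ι₂ ℂ)
    (B₂₂ : Matrix ι₂ ι₂ ℂ) (n₁ : ι₁ → ℤ) (n₂ : ι₂ → ℤ) :
    thetaTerm (Sum.elim u₁ u₂) (fromBlocks B₁₁ B₁₂ B₁₂ᵀ B₂₂) (Sum.elim n₁ n₂) =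
      thetaTerm (u₂ - B₁₂ᵀ *ᵥ zc n₁) B₂₂ n₂ *
        Complex.exp (2 * Real.pi * (-(1/2) * (zc n₁ ⬝ᵥ B₁₁ *ᵥ zc n₁) + zc n₁ ⬝ᵥ u₁)) := by
  have cross : zc n₁ ⬝ᵥ B₁₂ *ᵥ zc n₂ = zc n₂ ⬝ᵥ B₁₂ᵀ *ᵥ zc n₁ := by
    rw [dotProduct_mulVec, mulVec_transpose, dotProduct_comm]
  unfold thetaTerm
  rw [← Complex.exp_add, ← mul_add]
  congr 2
  simp only [zc_sumElim, fromBlocks_mulVec, sumElim_dotProduct_sumElim, dotProduct_add,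
    dotProduct_sub, Sum.elim_comp_inl, Sum.elim_comp_inr, cross]
  ring

theorem dg_marginal_general {ι₁ ι₂ : Type*} [Fintype ι₁] [Fintype ι₂]
    (u₁ : ι₁ → ℂ) (u₂ : ι₂ → ℂ) (B₁₁ : Matrix ι₁ ι₁ ℂ) (B₁₂ : Matrix ι₁ ι₂ ℂ)
    (B₂₂ : Matrix ι₂ ι₂ ℂ)
    (n₁ : ι₁ → ℤ) :
    ∑' n₂ : ι₂ → ℤ,
        dg (Sum.elim u₁ u₂) (Matrix.fromBlocks B₁₁ B₁₂ B₁₂ᵀ B₂₂) (Sum.elim n₁ n₂) =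
      (theta (u₂ - B₁₂ᵀ.mulVec (zc n₁)) B₂₂ /
          theta (Sum.elim u₁ u₂) (Matrix.fromBlocks B₁₁ B₁₂ B₁₂ᵀ B₂₂)) *
        Complex.exp ((2 * (Real.pi : ℂ)) *
          (-(1/2) * dotProduct (zc n₁) (B₁₁.mulVec (zc n₁)) + dotProduct (zc n₁) u₁)) := by
  simp only [dg, thetaTerm_fromBlocks_sumElim, mul_div_assoc]
  rw [tsum_mul_right, ← theta]
  ring

/-- Marginal of a joint discrete Gaussian: for `X = (X₁,X₂)` with block parameter
`B = [[B₁₁,B₁₂],[B₁₂ᵗ,B₂₂]]` and `u = (u₁,u₂)`,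
`ℙ(X₁=n₁) = (θ(u₂ - B₁₂ᵗn₁, B₂₂)/θ(u,B)) · e(-(1/2)n₁ᵗB₁₁n₁ + n₁ᵗu₁)`. -/
theorem dg_marginal {ι₁ ι₂ : Type*} [Fintype ι₁] [DecidableEq ι₁] [Fintype ι₂] [DecidableEq ι₂]
    (u₁ : ι₁ → ℂ) (u₂ : ι₂ → ℂ) (B₁₁ : Matrix ι₁ ι₁ ℂ) (B₁₂ : Matrix ι₁ ι₂ ℂ)
    (B₂₂ : Matrix ι₂ ι₂ ℂ)
    (hB : SiegelH (Matrix.fromBlocks B₁₁ B₁₂ B₁₂ᵀ B₂₂))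
    (hθ : theta (Sum.elim u₁ u₂) (Matrix.fromBlocks B₁₁ B₁₂ B₁₂ᵀ B₂₂) ≠ 0)
    (n₁ : ι₁ → ℤ) :
    ∑' n₂ : ι₂ → ℤ,
        dg (Sum.elim u₁ u₂) (Matrix.fromBlocks B₁₁ B₁₂ B₁₂ᵀ B₂₂) (Sum.elim n₁ n₂) =
      (theta (u₂ - B₁₂ᵀ.mulVec (zc n₁)) B₂₂ /
          theta (Sum.elim u₁ u₂) (Matrix.fromBlocks B₁₁ B₁₂ B₁₂ᵀ B₂₂)) *
        Complex.exp ((2 * (Real.pi : ℂ)) *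
          (-(1/2) * dotProduct (zc n₁) (B₁₁.mulVec (zc n₁)) + dotProduct (zc n₁) u₁)) :=
  dg_marginal_general u₁ u₂ B₁₁ B₁₂ B₂₂ n₁
end
end

section
/- Let (u,B) ∈ ℂ^g × ℍ_g with θ(u,B) ≠ 0. Then the mean of the discrete Gaussian X with parameters (u,B) is given coordinatewise by E[X_j] = (1/(2π)) · (∂θ/∂u_j)(u,B)/θ(u,B). -/
open scoped BigOperators
open Matrix

noncomputable section

variable {ι : Type*} [Fintype ι] [DecidableEq ι]

/-!
Differentiating the theta series term by term in `u_j` brings down the factor `2π n_j` from each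
term, which is the claim. The interchange is justified by a summable majorant of the derivatives
near `u_j`: positive definiteness of `Re B` gives `Re (nᵗBn) ≥ c ∑ nᵢ²` for some `c > 0`, so
the terms are dominated by a product over the coordinates of one-dimensional Gaussians
`exp (-π c nᵢ² + b |nᵢ|)`, and such products are summable over `ℤ^g`.
-/

open Finset

theorem Function.update_eq_add_single {κ M : Type*} [DecidableEq κ] [AddCommGroup M] (u : κ → M)
    (j : κ) (t : M) : Function.update u j t = u + Pi.single j (t - u j) := by
  ext i
  rcases eq_or_ne i j with rfl | h <;> simp [*, add_sub_cancel]

theorem Complex.re_ofReal_dotProduct {κ : Type*} [Fintype κ] (v : κ → ℝ) (w : κ → ℂ) :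
    ((fun i => (v i : ℂ)) ⬝ᵥ w).re = v ⬝ᵥ fun i => (w i).re := by
  simp [dotProduct, Complex.re_sum]

theorem Complex.re_ofReal_dotProduct_mulVec {κ : Type*} [Fintype κ] (B : Matrix κ κ ℂ)
    (v : κ → ℝ) :
    ((fun i => (v i : ℂ)) ⬝ᵥ B *ᵥ fun i => (v i : ℂ)).re = v ⬝ᵥ B.map Complex.re *ᵥ v := by
  simp [mulVec, dotProduct, Complex.re_sum]

theorem exists_pos_mul_norm_sq_le {E : Type*} [NormedAddCommGroup E] [NormedSpace ℝ E]
    [FiniteDimensional ℝ E] {q : E → ℝ} (hq : Continuous q)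
    (hsmul : ∀ (t : ℝ) x, q (t • x) = t ^ 2 * q x) (hpos : ∀ x ≠ 0, 0 < q x) :
    ∃ c > 0, ∀ x, c * ‖x‖ ^ 2 ≤ q x := by
  rcases subsingleton_or_nontrivial E with hE | hE
  · exact ⟨1, one_pos, fun x => by simpa [Subsingleton.elim x 0] using (hsmul 0 0).ge⟩
  obtain ⟨x₀, hx₀, hmin⟩ := (isCompact_sphere (0 : E) 1).exists_isMinOn
    (NormedSpace.sphere_nonempty.2 zero_le_one) hq.continuousOn
  have hx₀ : ‖x₀‖ = 1 := by simpa using hx₀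
  refine ⟨q x₀, hpos x₀ (norm_ne_zero_iff.1 (by simp [hx₀])), fun x => ?_⟩
  rcases eq_or_ne x 0 with rfl | hx
  · simpa using (hsmul 0 0).ge
  have hunit : ‖x‖⁻¹ • x ∈ Metric.sphere (0 : E) 1 := by
    simp [norm_smul, hx]
  calc q x₀ * ‖x‖ ^ 2 ≤ q (‖x‖⁻¹ • x) * ‖x‖ ^ 2 := by gcongr; exact hmin hunit
    _ = q x := by rw [hsmul]; field_simp

theorem Matrix.PosDef.exists_pos_mul_sum_sq_le {κ : Type*} [Fintype κ] {A : Matrix κ κ ℝ}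
    (hA : A.PosDef) : ∃ c > 0, ∀ x : κ → ℝ, c * ∑ i, x i ^ 2 ≤ x ⬝ᵥ A *ᵥ x := by
  obtain ⟨c, hc, h⟩ := exists_pos_mul_norm_sq_le (E := EuclideanSpace ℝ κ)
    (q := fun x => x.ofLp ⬝ᵥ A *ᵥ x.ofLp) (by fun_prop)
    (fun t x => by
      simp only [WithLp.ofLp_smul, mulVec_smul, dotProduct_smul, smul_dotProduct, smul_eq_mul]
      ring)
    (fun x hx => by simpa using hA.dotProduct_mulVec_pos (x := x.ofLp) (by simpa using hx))
  exact ⟨c, hc, fun x => by simpa [EuclideanSpace.real_norm_sq_eq] using h (WithLp.toLp 2 x)⟩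

theorem summable_fintype_prod_of_nonneg {ι κ : Type*} [Fintype ι] {f : ι → κ → ℝ}
    (hf₀ : ∀ i k, 0 ≤ f i k) (hf : ∀ i, Summable (f i)) :
    Summable fun x : ι → κ => ∏ i, f i (x i) := by
  classical
  refine summable_of_sum_le (c := ∏ i, ∑' k, f i k)
    (fun x => prod_nonneg fun i _ => hf₀ i (x i)) fun t => ?_
  calc ∑ x ∈ t, ∏ i, f i (x i)
      ≤ ∑ x ∈ Fintype.piFinset fun i => t.image (· i), ∏ i, f i (x i) :=
        sum_le_sum_of_subset_of_nonneg
          (fun x hx => Fintype.mem_piFinset.2 fun i => mem_image_of_mem _ hx)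
          fun x _ _ => prod_nonneg fun i _ => hf₀ i (x i)
    _ = ∏ i, ∑ k ∈ t.image (· i), f i k := (prod_univ_sum _ _).symm
    _ ≤ ∏ i, ∑' k, f i k :=
        prod_le_prod (fun i _ => sum_nonneg fun k _ => hf₀ i k)
          fun i _ => (hf i).sum_le_tsum _ fun k _ => hf₀ i k

theorem Real.summable_exp_neg_abs_int : Summable fun m : ℤ => Real.exp (-|(m : ℝ)|) :=
  .of_nat_of_neg (by simpa using Real.summable_exp_neg_nat)
    (by simpa using Real.summable_exp_neg_nat)

theorem Real.summable_exp_neg_mul_sq_add_mul_abs {a : ℝ} (ha : 0 < a) (b : ℝ) :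
    Summable fun m : ℤ => Real.exp (-a * (m : ℝ) ^ 2 + b * |(m : ℝ)|) := by
  -- completing the square: `-a m² + b|m| ≤ (b + 1)² / (4a) - |m|`
  refine .of_nonneg_of_le (fun m => (Real.exp_pos _).le) (fun m => ?_)
    (Real.summable_exp_neg_abs_int.mul_left (Real.exp ((b + 1) ^ 2 / (4 * a))))
  rw [← Real.exp_add, Real.exp_le_exp, div_add' _ _ _ (by positivity), le_div_iff₀ (by positivity),
    ← sq_abs (m : ℝ)]
  linarith [sq_nonneg (2 * a * |(m : ℝ)| - (b + 1))]

theorem Real.summable_exp_sum_neg_mul_sq_add_mul_abs {κ : Type*} [Fintype κ] {a : ℝ}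
    (ha : 0 < a) (b : ℝ) :
    Summable fun n : κ → ℤ => Real.exp (∑ i, (-a * (n i : ℝ) ^ 2 + b * |(n i : ℝ)|)) := by
  simp_rw [Real.exp_sum]
  exact summable_fintype_prod_of_nonneg
    (f := fun _ (m : ℤ) => Real.exp (-a * (m : ℝ) ^ 2 + b * |(m : ℝ)|)) 
    (fun _ _ => (Real.exp_pos _).le) fun _ => summable_exp_neg_mul_sq_add_mul_abs ha b

theorem thetaTerm_update (u : ι → ℂ) (B : Matrix ι ι ℂ) (j : ι) (t : ℂ) (n : ι → ℤ) :
    thetaTerm (Function.update u j t) B n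
      = thetaTerm u B n * Complex.exp (2 * Real.pi * n j * (t - u j)) := by
  rw [thetaTerm, thetaTerm, ← Complex.exp_add, Function.update_eq_add_single, dotProduct_add,
    dotProduct_single, zc]
  ring_nf

theorem hasDerivAt_thetaTerm_update (u : ι → ℂ) (B : Matrix ι ι ℂ) (j : ι) (n : ι → ℤ) (t : ℂ) :
    HasDerivAt (fun t => thetaTerm (Function.update u j t) B n)
      (2 * Real.pi * n j * thetaTerm (Function.update u j t) B n) t := by
  simp_rw [thetaTerm_update]
  refine ((((hasDerivAt_id t).sub_const (u j)).const_mul (2 * Real.pi * n j : ℂ)).cexp.const_mul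
    (thetaTerm u B n)).congr_deriv ?_
  simp only [id, mul_one]
  ring

omit [DecidableEq ι] in
theorem norm_thetaTerm (w : ι → ℂ) (B : Matrix ι ι ℂ) (n : ι → ℤ) :
    ‖thetaTerm w B n‖ = Real.exp (2 * Real.pi *
      (-(1 / 2) * ((fun i => (n i : ℝ)) ⬝ᵥ B.map Complex.re *ᵥ fun i => (n i : ℝ))
        + (fun i => (n i : ℝ)) ⬝ᵥ fun i => (w i).re)) := by
  have hzc : zc n = fun i => ((n i : ℝ) : ℂ) := by ext; simp [zc]
  rw [thetaTerm, Complex.norm_exp, hzc, ← Complex.re_ofReal_dotProduct_mulVec,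
    ← Complex.re_ofReal_dotProduct]
  norm_num [Complex.mul_re]

omit [DecidableEq ι] in
theorem norm_thetaTerm_le {B : Matrix ι ι ℂ} {c : ℝ}
    (hc : ∀ x : ι → ℝ, c * ∑ i, x i ^ 2 ≤ x ⬝ᵥ B.map Complex.re *ᵥ x) {w : ι → ℂ} {M : ℝ}
    (hw : ‖w‖ ≤ M) (n : ι → ℤ) :
    ‖thetaTerm w B n‖
      ≤ Real.exp (∑ i, (-(Real.pi * c) * (n i : ℝ) ^ 2 + 2 * Real.pi * M * |(n i : ℝ)|)) := by
  rw [norm_thetaTerm, Real.exp_le_exp, sum_add_distrib, ← mul_sum, ← mul_sum]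
  have hquad := hc fun i => (n i : ℝ)
  have hlin : ((fun i => (n i : ℝ)) ⬝ᵥ fun i => (w i).re) ≤ M * ∑ i, |(n i : ℝ)| := by
    rw [mul_sum]
    refine sum_le_sum fun i _ => ?_
    calc (n i : ℝ) * (w i).re ≤ |(n i : ℝ)| * ‖w i‖ := by
          refine (le_abs_self _).trans ?_
          rw [abs_mul]
          gcongr
          exact Complex.abs_re_le_norm _
      _ ≤ M * |(n i : ℝ)| := by
          rw [mul_comm]
          gcongr
          exact (norm_le_pi_norm w i).trans hw
  nlinarith [Real.pi_pos]

omit [DecidableEq ι] in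
theorem norm_mul_thetaTerm_le {B : Matrix ι ι ℂ} {c : ℝ}
    (hc : ∀ x : ι → ℝ, c * ∑ i, x i ^ 2 ≤ x ⬝ᵥ B.map Complex.re *ᵥ x) {w : ι → ℂ} {M : ℝ}
    (hw : ‖w‖ ≤ M) (n : ι → ℤ) (j : ι) :
    ‖2 * Real.pi * n j * thetaTerm w B n‖ ≤ 2 * Real.pi *
      Real.exp (∑ i, (-(Real.pi * c) * (n i : ℝ) ^ 2 + (2 * Real.pi * M + 1) * |(n i : ℝ)|)) := by
  have hnj : |(n j : ℝ)| ≤ Real.exp (∑ i, |(n i : ℝ)|) :=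
    (single_le_sum (f := fun i => |(n i : ℝ)|) (fun i _ => abs_nonneg _) (mem_univ j)).trans
      ((le_add_of_nonneg_right zero_le_one).trans (Real.add_one_le_exp _))
  calc ‖2 * Real.pi * n j * thetaTerm w B n‖
      = 2 * Real.pi * (|(n j : ℝ)| * ‖thetaTerm w B n‖) := by
        simp [Real.pi_pos.le, mul_assoc]
    _ ≤ 2 * Real.pi * (Real.exp (∑ i, |(n i : ℝ)|) *
          Real.exp (∑ i, (-(Real.pi * c) * (n i : ℝ) ^ 2 + 2 * Real.pi * M * |(n i : ℝ)|))) := by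
        gcongr
        exact norm_thetaTerm_le hc hw n
    _ = _ := by
        rw [← Real.exp_add, ← sum_add_distrib]
        congr 2
        exact sum_congr rfl fun i _ => by ring

theorem hasDerivAt_theta_update (u : ι → ℂ) {B : Matrix ι ι ℂ} (hB : (B.map Complex.re).PosDef)
    (j : ι) :
    HasDerivAt (fun t => theta (Function.update u j t) B)
      (∑' n, 2 * Real.pi * n j * thetaTerm u B n) (u j) := by
  obtain ⟨c, hc, hquad⟩ := hB.exists_pos_mul_sum_sq_le
  have hball : ∀ t ∈ Metric.ball (u j) 1, ‖Function.update u j t‖ ≤ ‖u‖ + 1 := fun t ht => by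
    rw [Function.update_eq_add_single]
    refine (norm_add_le _ _).trans ?_
    gcongr
    rw [Pi.norm_single]
    exact (mem_ball_iff_norm.1 ht).le
  have hu : u j ∈ Metric.ball (u j) 1 := Metric.mem_ball_self one_pos
  have hsummable : Summable fun n => thetaTerm (Function.update u j (u j)) B n :=
    .of_norm_bounded (Real.summable_exp_sum_neg_mul_sq_add_mul_abs (by positivity) _)
      (norm_thetaTerm_le hquad (hball _ hu))
  have h := hasDerivAt_tsum_of_isPreconnected
    ((Real.summable_exp_sum_neg_mul_sq_add_mul_abs (by positivity) _).mul_left _)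
    Metric.isOpen_ball (convex_ball _ _).isPreconnected
    (fun n t _ => hasDerivAt_thetaTerm_update u B j n t)
    (fun n t ht => norm_mul_thetaTerm_le hquad (hball t ht) n j) hu hsummable hu
  rw [Function.update_eq_self] at h
  exact h

theorem dg_mean_general (u : ι → ℂ) (B : Matrix ι ι ℂ) (hB : SiegelH B) (j : ι) :
    ∑' n : ι → ℤ, (n j : ℂ) * dg u B n =
      (1 / (2 * (Real.pi : ℂ))) *
        deriv (fun t : ℂ => theta (Function.update u j t) B) (u j) / theta u B := by
  have hπ : (2 * (Real.pi : ℂ)) ≠ 0 := by simp [Real.pi_ne_zero]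
  simp_rw [(hasDerivAt_theta_update u hB.2 j).deriv, mul_assoc, tsum_mul_left, dg, mul_div_assoc',
    tsum_div_const]
  field_simp

/-- Mean of the discrete Gaussian: `E[X_j] = (1/(2π)) (∂θ/∂u_j)(u,B)/θ(u,B)`. -/
theorem dg_mean (u : ι → ℂ) (B : Matrix ι ι ℂ) (hB : SiegelH B)
    (hθ : theta u B ≠ 0) (j : ι) :
    ∑' n : ι → ℤ, (n j : ℂ) * dg u B n =
      (1 / (2 * (Real.pi : ℂ))) *
        deriv (fun t : ℂ => theta (Function.update u j t) B) (u j) / theta u B :=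
  dg_mean_general u B hB j
end
end
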